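/- arXiv:1211.2574 — 3 statements merged into one kernel-verified Lean document; each statement's English description precedes it below -/
import Mathlib

section
/- Let W : Ω × ℝ^d × ℝ^{d×N} → ℝ be continuous, satisfying the growth condition (1/C)|ξ| - C ≤ W(x,u,ξ) ≤ C(1+|ξ|), and suppose for every compact K ⊂ Ω × ℝ^d there is a modulus of continuity ω_K with |W(x,u,ξ) - W(x',u',ξ)| ≤ ω_K(|x-x'|+|u-u'|)(1+|ξ|) for all (x,u),(x',u') ∈ K and all ξ. Then for every compact K ⊂ Ω × ℝ^d there exists a modulus of continuity ω'_K such that |QW(x,u,ξ) - QW(x',u',ξ)| ≤ ω'_K(|x-x'|+|u-u'|)(1+|ξ|) for all (x,u),(x',u') ∈ K and all ξ ∈ ℝ^{d×N}. -/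
open MeasureTheory Filter Set

noncomputable section

/-- The open unit cube `Q = (0,1)^N` in `ℝ^N`. -/
def unitCube (N : ℕ) : Set (Fin N → ℝ) := Set.univ.pi fun _ => Set.Ioo (0:ℝ) 1

/-- The gradient matrix `∇φ(y) ∈ ℝ^{d×N}` of `φ : ℝ^N → ℝ^d`. -/
def gradMat {N d : ℕ} (φ : (Fin N → ℝ) → (Fin d → ℝ)) (y : Fin N → ℝ) :
    Fin d → Fin N → ℝ := fun i j => fderiv ℝ φ y (Pi.single j 1) i

/-- Test functions in `W_0^{1,∞}(Q;ℝ^d)`: Lipschitz maps vanishing outside the unit cube. -/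
def TestFun {N d : ℕ} (φ : (Fin N → ℝ) → (Fin d → ℝ)) : Prop :=
  (∃ K, LipschitzWith K φ) ∧ ∀ y ∉ unitCube N, φ y = 0

/-- Quasiconvex envelope (quasiconvexification) of `h` computed over the unit cube. -/
def qcEnv {N d : ℕ} (h : (Fin d → Fin N → ℝ) → ℝ) (ξ : Fin d → Fin N → ℝ) : ℝ :=
  sInf {r | ∃ φ, TestFun φ ∧ r = ∫ y in unitCube N, h (ξ + gradMat φ y)}

/-- Recession function: `h^∞(ξ) = limsup_{t→∞} h(tξ)/t`. -/
def recFn {N d : ℕ} (h : (Fin d → Fin N → ℝ) → ℝ) (ξ : Fin d → Fin N → ℝ) : ℝ :=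
  Filter.limsup (fun t : ℝ => h (t • ξ) / t) Filter.atTop

/-- Quasiconvexity in the sense of Morrey: for some bounded open set `D` of positive
measure, `h(ξ) ≤ (1/|D|) ∫_D h(ξ + ∇φ)` for all Lipschitz `φ` vanishing outside `D`. -/
def MorreyQC {N d : ℕ} (h : (Fin d → Fin N → ℝ) → ℝ) : Prop :=
  ∃ D : Set (Fin N → ℝ), IsOpen D ∧ Bornology.IsBounded D ∧ 0 < volume D ∧
    ∀ (ξ : Fin d → Fin N → ℝ) (φ : (Fin N → ℝ) → Fin d → ℝ),
      (∃ K, LipschitzWith K φ) → (∀ y ∉ D, φ y = 0) →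
      h ξ ≤ ((volume D).toReal)⁻¹ * ∫ y in D, h (ξ + gradMat φ y)

/-- A modulus of continuity. -/
def Modulus (ω : ℝ → ℝ) : Prop := Continuous ω ∧ ω 0 = 0 ∧ ∀ t, 0 ≤ ω t

/-- Convex envelope of `g : ℝ^m → ℝ`: pointwise supremum of convex minorants. -/
def convEnv {m : ℕ} (g : (Fin m → ℝ) → ℝ) (v : Fin m → ℝ) : ℝ :=
  sSup {r | ∃ h : (Fin m → ℝ) → ℝ, ConvexOn ℝ Set.univ h ∧ (∀ w, h w ≤ g w) ∧ r = h v}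

/-- Supremum of lower semicontinuous convex minorants (the biconjugate `g**`). -/
def biconj {m : ℕ} (g : (Fin m → ℝ) → ℝ) (v : Fin m → ℝ) : ℝ :=
  sSup {r | ∃ h : (Fin m → ℝ) → ℝ, ConvexOn ℝ Set.univ h ∧ LowerSemicontinuous h ∧
    (∀ w, h w ≤ g w) ∧ r = h v}

/-- Quasiconvex-convex envelope of `f(ξ,v)` over the unit cube. -/
def qcxcEnv {N d m : ℕ} (f : (Fin d → Fin N → ℝ) → (Fin m → ℝ) → ℝ)
    (ξ : Fin d → Fin N → ℝ) (v : Fin m → ℝ) : ℝ :=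
  sInf {r | ∃ (ψ : (Fin N → ℝ) → Fin d → ℝ) (η : (Fin N → ℝ) → Fin m → ℝ),
    TestFun ψ ∧ Measurable η ∧ (∃ M, ∀ y, ‖η y‖ ≤ M) ∧
    (∫ y in unitCube N, η y) = 0 ∧
    r = ∫ y in unitCube N, f (ξ + gradMat ψ y) (v + η y)}

/-!
Fix two points `p, q` of `K`, write `h = W p` and `g = W q`, and let `ω` be the modulus of `W`
on `K`, evaluated at the distance of `p` and `q`. The coercivity of `h` gives
`‖η‖ ≤ C h(η) + C²`, so `g ≤ h + ω (1 + ‖η‖) ≤ (1 + ω C) h + ω (1 + C²)` pointwise. Since the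
quasiconvexification is monotone and commutes with positive affine maps of the integrand,
`Qg(ξ) ≤ (1 + ω C) Qh(ξ) + ω (1 + C²)`, and `Qh(ξ) ≤ h(ξ) ≤ C (1 + ‖ξ‖)` turns this into
`Qg(ξ) ≤ Qh(ξ) + (1 + 2C²) ω (1 + ‖ξ‖)`. Exchanging `p` and `q` gives the modulus
`(1 + 2C²) ω`.
-/

open scoped NNReal

section

variable {N d : ℕ}

lemma measurableSet_unitCube : MeasurableSet (unitCube N) :=
  (isOpen_set_pi Set.finite_univ fun _ _ => isOpen_Ioo).measurableSet

lemma volume_unitCube : volume (unitCube N) = 1 := by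
  simp [unitCube, volume_pi_pi, Real.volume_Ioo]

lemma setIntegral_unitCube_const (c : ℝ) : ∫ _ in unitCube N, c = c := by
  simp [measureReal_def, volume_unitCube]

lemma integrableOn_unitCube_const (c : ℝ) : IntegrableOn (fun _ => c) (unitCube N) :=
  integrableOn_const (by simp [volume_unitCube])

lemma gradMat_const_zero : gradMat (fun _ : Fin N → ℝ => (0 : Fin d → ℝ)) = 0 := by
  funext y i j
  simp [gradMat]

lemma testFun_zero : TestFun (fun _ : Fin N → ℝ => (0 : Fin d → ℝ)) :=
  ⟨⟨0, LipschitzWith.const' 0⟩, fun _ _ => rfl⟩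

lemma measurable_gradMat (φ : (Fin N → ℝ) → Fin d → ℝ) : Measurable (gradMat φ) :=
  measurable_pi_lambda _ fun i => measurable_pi_lambda _ fun j =>
    (measurable_pi_apply i).comp (measurable_fderiv_apply_const ℝ (f := φ) (Pi.single j 1))

lemma LipschitzWith.norm_gradMat_le {φ : (Fin N → ℝ) → Fin d → ℝ} {K : ℝ≥0}
    (hφ : LipschitzWith K φ) (y : Fin N → ℝ) : ‖gradMat φ y‖ ≤ K := by
  refine (pi_norm_le_iff_of_nonneg K.coe_nonneg).2 fun i =>
    (pi_norm_le_iff_of_nonneg K.coe_nonneg).2 fun j => ?_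
  calc ‖gradMat φ y i j‖ ≤ ‖fderiv ℝ φ y (Pi.single j 1)‖ := norm_le_pi_norm _ i
    _ ≤ ‖fderiv ℝ φ y‖ * ‖(Pi.single j 1 : Fin N → ℝ)‖ := (fderiv ℝ φ y).le_opNorm _
    _ = ‖fderiv ℝ φ y‖ := by simp [Pi.norm_single]
    _ ≤ K := norm_fderiv_le_of_lipschitz ℝ hφ

lemma LipschitzWith.integrableOn_unitCube_comp_gradMat {h : (Fin d → Fin N → ℝ) → ℝ}
    (hc : Continuous h) {φ : (Fin N → ℝ) → Fin d → ℝ} {K : ℝ≥0} (hφ : LipschitzWith K φ)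
    (ξ : Fin d → Fin N → ℝ) :
    IntegrableOn (fun y => h (ξ + gradMat φ y)) (unitCube N) := by
  obtain ⟨B, hB⟩ := (isCompact_closedBall (0 : Fin d → Fin N → ℝ) (‖ξ‖ + K))
    |>.exists_bound_of_continuousOn hc.continuousOn
  refine Integrable.mono' (integrableOn_unitCube_const B)
    (hc.measurable.comp (measurable_const.add (measurable_gradMat φ))).aestronglyMeasurable
    (Eventually.of_forall fun y => hB _ ?_)
  rw [mem_closedBall_zero_iff]
  exact (norm_add_le _ _).trans (by linarith [hφ.norm_gradMat_le y])

lemma TestFun.integrableOn_unitCube_comp_gradMat {h : (Fin d → Fin N → ℝ) → ℝ}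
    (hc : Continuous h) {φ : (Fin N → ℝ) → Fin d → ℝ} (hφ : TestFun φ)
    (ξ : Fin d → Fin N → ℝ) :
    IntegrableOn (fun y => h (ξ + gradMat φ y)) (unitCube N) :=
  hφ.1.choose_spec.integrableOn_unitCube_comp_gradMat hc ξ

lemma le_qcEnv {h : (Fin d → Fin N → ℝ) → ℝ} {ξ : Fin d → Fin N → ℝ} {c : ℝ}
    (hc : ∀ φ, TestFun φ → c ≤ ∫ y in unitCube N, h (ξ + gradMat φ y)) :
    c ≤ qcEnv h ξ :=
  le_csInf ⟨_, _, testFun_zero, rfl⟩ <| by rintro _ ⟨φ, hφ, rfl⟩; exact hc φ hφ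

lemma qcEnv_le_integral {h : (Fin d → Fin N → ℝ) → ℝ} (hc : Continuous h) {m : ℝ}
    (hm : ∀ η, m ≤ h η) (ξ : Fin d → Fin N → ℝ) {φ : (Fin N → ℝ) → Fin d → ℝ}
    (hφ : TestFun φ) : qcEnv h ξ ≤ ∫ y in unitCube N, h (ξ + gradMat φ y) := by
  refine csInf_le ⟨m, ?_⟩ ⟨φ, hφ, rfl⟩
  rintro _ ⟨ψ, hψ, rfl⟩
  calc m = ∫ _ in unitCube N, m := (setIntegral_unitCube_const m).symm
    _ ≤ _ := setIntegral_mono_on (integrableOn_unitCube_const m)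
        (hψ.integrableOn_unitCube_comp_gradMat hc ξ) measurableSet_unitCube fun y _ => hm _

lemma qcEnv_le_self {h : (Fin d → Fin N → ℝ) → ℝ} (hc : Continuous h) {m : ℝ}
    (hm : ∀ η, m ≤ h η) (ξ : Fin d → Fin N → ℝ) : qcEnv h ξ ≤ h ξ := by
  simpa [gradMat_const_zero, measureReal_def, volume_unitCube] using
    qcEnv_le_integral hc hm ξ testFun_zero

lemma qcEnv_le_mul_qcEnv_add {h g : (Fin d → Fin N → ℝ) → ℝ} (hc : Continuous h)
    (gc : Continuous g) {m : ℝ} (hm : ∀ η, m ≤ g η) {a b : ℝ} (ha : 0 < a)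
    (hgh : ∀ η, g η ≤ a * h η + b) (ξ : Fin d → Fin N → ℝ) :
    qcEnv g ξ ≤ a * qcEnv h ξ + b := by
  suffices (qcEnv g ξ - b) / a ≤ qcEnv h ξ by
    rw [div_le_iff₀ ha] at this; linarith
  refine le_qcEnv fun φ hφ => (div_le_iff₀ ha).2 ?_
  have hint := hφ.integrableOn_unitCube_comp_gradMat hc ξ
  calc qcEnv g ξ - b ≤ (∫ y in unitCube N, g (ξ + gradMat φ y)) - b := by
        linarith [qcEnv_le_integral gc hm ξ hφ]
    _ ≤ (∫ y in unitCube N, (a * h (ξ + gradMat φ y) + b)) - b :=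
        sub_le_sub_right (setIntegral_mono_on (hφ.integrableOn_unitCube_comp_gradMat gc ξ)
          ((hint.const_mul a).add (integrableOn_unitCube_const b)) measurableSet_unitCube
          fun y _ => hgh _) b
    _ = (∫ y in unitCube N, h (ξ + gradMat φ y)) * a := by
        rw [integral_add (hint.const_mul a) (integrableOn_unitCube_const b), integral_const_mul,
          setIntegral_unitCube_const]
        ring

lemma norm_le_of_coercive {C r x : ℝ} (hC : 0 < C) (h : (1 / C) * r - C ≤ x) :
    r ≤ C * x + C ^ 2 := by
  have : r / C ≤ x + C := by rw [div_eq_inv_mul, ← one_div]; linarith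
  rw [div_le_iff₀ hC] at this
  linarith

lemma neg_le_of_coercive {C r x : ℝ} (hC : 0 < C) (hr : 0 ≤ r) (h : (1 / C) * r - C ≤ x) :
    -C ≤ x := by
  nlinarith [one_div_pos.2 hC]

lemma qcEnv_le_qcEnv_add {h g : (Fin d → Fin N → ℝ) → ℝ} (hc : Continuous h)
    (gc : Continuous g) {C : ℝ} (hC : 0 < C)
    (hgrowth : ∀ η, (1 / C) * ‖η‖ - C ≤ h η ∧ h η ≤ C * (1 + ‖η‖))
    {m : ℝ} (hm : ∀ η, m ≤ g η) {ω : ℝ} (hω : 0 ≤ ω)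
    (hgh : ∀ η, |g η - h η| ≤ ω * (1 + ‖η‖)) (ξ : Fin d → Fin N → ℝ) :
    qcEnv g ξ ≤ qcEnv h ξ + (1 + 2 * C ^ 2) * ω * (1 + ‖ξ‖) := by
  have hpt : ∀ η, g η ≤ (1 + ω * C) * h η + ω * (1 + C ^ 2) := fun η => by
    have hnorm := norm_le_of_coercive hC (hgrowth η).1
    nlinarith [(abs_le.1 (hgh η)).2, mul_le_mul_of_nonneg_left hnorm hω]
  have hQh : qcEnv h ξ ≤ C * (1 + ‖ξ‖) :=
    (qcEnv_le_self hc (fun η => neg_le_of_coercive hC (norm_nonneg η) (hgrowth η).1) ξ).trans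
      (hgrowth ξ).2
  have hωC : 0 ≤ ω * C := mul_nonneg hω hC.le
  calc qcEnv g ξ ≤ (1 + ω * C) * qcEnv h ξ + ω * (1 + C ^ 2) :=
        qcEnv_le_mul_qcEnv_add hc gc hm (by positivity) hpt ξ
    _ ≤ qcEnv h ξ + (1 + 2 * C ^ 2) * ω * (1 + ‖ξ‖) := by
        nlinarith [mul_le_mul_of_nonneg_left hQh hωC, mul_nonneg hω (norm_nonneg ξ),
          mul_nonneg (mul_nonneg hω (sq_nonneg C)) (norm_nonneg ξ)]

lemma abs_qcEnv_sub_qcEnv_le {h g : (Fin d → Fin N → ℝ) → ℝ} (hc : Continuous h)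
    (gc : Continuous g) {C : ℝ} (hC : 0 < C)
    (hgrowth : ∀ η, (1 / C) * ‖η‖ - C ≤ h η ∧ h η ≤ C * (1 + ‖η‖))
    (ggrowth : ∀ η, (1 / C) * ‖η‖ - C ≤ g η ∧ g η ≤ C * (1 + ‖η‖)) {ω : ℝ} (hω : 0 ≤ ω)
    (hgh : ∀ η, |h η - g η| ≤ ω * (1 + ‖η‖)) (ξ : Fin d → Fin N → ℝ) :
    |qcEnv h ξ - qcEnv g ξ| ≤ (1 + 2 * C ^ 2) * ω * (1 + ‖ξ‖) := by
  have hh : ∀ η, -C ≤ h η := fun η => neg_le_of_coercive hC (norm_nonneg η) (hgrowth η).1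
  have hg : ∀ η, -C ≤ g η := fun η => neg_le_of_coercive hC (norm_nonneg η) (ggrowth η).1
  rw [abs_sub_le_iff]
  constructor
  · linarith [qcEnv_le_qcEnv_add gc hc hC ggrowth hh hω
      (fun η => abs_sub_comm (g η) (h η) ▸ hgh η) ξ]
  · linarith [qcEnv_le_qcEnv_add hc gc hC hgrowth hg hω
      (fun η => abs_sub_comm (h η) (g η) ▸ hgh η) ξ]

end

theorem stmt1_general {N d : ℕ} (Ω : Set (Fin N → ℝ))
    (W : (Fin N → ℝ) → (Fin d → ℝ) → (Fin d → Fin N → ℝ) → ℝ)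
    (hWcont : Continuous fun p : (Fin N → ℝ) × (Fin d → ℝ) × (Fin d → Fin N → ℝ) =>
      W p.1 p.2.1 p.2.2)
    (C : ℝ) (hC : 0 < C)
    (hW : ∀ x ∈ Ω, ∀ (u : Fin d → ℝ) (ξ : Fin d → Fin N → ℝ),
      (1 / C) * ‖ξ‖ - C ≤ W x u ξ ∧ W x u ξ ≤ C * (1 + ‖ξ‖))
    (hmod : ∀ K : Set ((Fin N → ℝ) × (Fin d → ℝ)), IsCompact K → K ⊆ Ω ×ˢ Set.univ →
      ∃ ω : ℝ → ℝ, Modulus ω ∧ ∀ p ∈ K, ∀ q ∈ K, ∀ ξ : Fin d → Fin N → ℝ,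
        |W p.1 p.2 ξ - W q.1 q.2 ξ| ≤ ω (‖p.1 - q.1‖ + ‖p.2 - q.2‖) * (1 + ‖ξ‖)) :
    ∀ K : Set ((Fin N → ℝ) × (Fin d → ℝ)), IsCompact K → K ⊆ Ω ×ˢ Set.univ →
      ∃ ω' : ℝ → ℝ, Modulus ω' ∧ ∀ p ∈ K, ∀ q ∈ K, ∀ ξ : Fin d → Fin N → ℝ,
        |qcEnv (W p.1 p.2) ξ - qcEnv (W q.1 q.2) ξ| ≤
          ω' (‖p.1 - q.1‖ + ‖p.2 - q.2‖) * (1 + ‖ξ‖) := by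
  intro K hK hKΩ
  obtain ⟨ω, ⟨hωc, hω0, hωnn⟩, hωK⟩ := hmod K hK hKΩ
  refine ⟨fun t => (1 + 2 * C ^ 2) * ω t,
    ⟨continuous_const.mul hωc, by simp [hω0], fun t => by have := hωnn t; positivity⟩, ?_⟩
  intro p hp q hq ξ
  have hWc : ∀ x u, Continuous (W x u) := fun x u =>
    hWcont.comp (continuous_const.prodMk (continuous_const.prodMk continuous_id))
  simpa only [mul_assoc] using abs_qcEnv_sub_qcEnv_le (hWc _ _) (hWc _ _) hC
    (hW _ (hKΩ hp).1 _) (hW _ (hKΩ hq).1 _) (hωnn _) (hωK p hp q hq) ξ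

theorem stmt1 {N d : ℕ} (Ω : Set (Fin N → ℝ)) (hΩo : IsOpen Ω) (hΩb : Bornology.IsBounded Ω)
    (W : (Fin N → ℝ) → (Fin d → ℝ) → (Fin d → Fin N → ℝ) → ℝ)
    (hWcont : Continuous fun p : (Fin N → ℝ) × (Fin d → ℝ) × (Fin d → Fin N → ℝ) =>
      W p.1 p.2.1 p.2.2)
    (C : ℝ) (hC : 0 < C)
    (hW : ∀ x ∈ Ω, ∀ (u : Fin d → ℝ) (ξ : Fin d → Fin N → ℝ),
      (1 / C) * ‖ξ‖ - C ≤ W x u ξ ∧ W x u ξ ≤ C * (1 + ‖ξ‖))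
    (hmod : ∀ K : Set ((Fin N → ℝ) × (Fin d → ℝ)), IsCompact K → K ⊆ Ω ×ˢ Set.univ →
      ∃ ω : ℝ → ℝ, Modulus ω ∧ ∀ p ∈ K, ∀ q ∈ K, ∀ ξ : Fin d → Fin N → ℝ,
        |W p.1 p.2 ξ - W q.1 q.2 ξ| ≤ ω (‖p.1 - q.1‖ + ‖p.2 - q.2‖) * (1 + ‖ξ‖)) :
    ∀ K : Set ((Fin N → ℝ) × (Fin d → ℝ)), IsCompact K → K ⊆ Ω ×ˢ Set.univ →
      ∃ ω' : ℝ → ℝ, Modulus ω' ∧ ∀ p ∈ K, ∀ q ∈ K, ∀ ξ : Fin d → Fin N → ℝ,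
        |qcEnv (W p.1 p.2) ξ - qcEnv (W q.1 q.2) ξ| ≤
          ω' (‖p.1 - q.1‖ + ‖p.2 - q.2‖) * (1 + ‖ξ‖) :=
  stmt1_general Ω W hWcont C hC hW hmod
end
end

section
/- For a function W : Ω × ℝ^d × ℝ^{d×N} → [0,∞), the following two conditions are equivalent: (a) there exist α ∈ (0,1) and C, L > 0 such that whenever t|ξ| > L, |W^∞(x,u,ξ) - W(x,u,tξ)/t| ≤ C |ξ|^{1-α}/t^α for all (x,u,ξ) and t ∈ ℝ; (b) there exist α ∈ (0,1) and C > 0 such that |W^∞(x,u,ξ) - W(x,u,ξ)| ≤ C(1+|ξ|^{1-α}) for all (x,u,ξ) ∈ Ω × ℝ^d × ℝ^{d×N}, assuming W satisfies the linear growth and coercivity bounds (1/C)|ξ| - C ≤ W(x,u,ξ) ≤ C(1+|ξ|). -/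
open MeasureTheory Filter Set

noncomputable section

/-! For nonnegative `h` with `h ζ ≤ B (1 + |ζ|)`, the quotients `h (t ξ) / t` are eventually
trapped between `0` and `B (1/t + |ξ|)`, so `h^∞` is finite, positively one-homogeneous and
`0 ≤ h^∞ ξ ≤ B |ξ|`. Homogeneity gives `h^∞ ξ - h (t ξ) / t = (h^∞ (t ξ) - h (t ξ)) / t`, so (b)
applied at `t ξ` yields (a) once `t |ξ| > 1`. Conversely, (a) at `t = 1` gives (b) for `|ξ| > L`,
while for `|ξ| ≤ L` both `h ξ` and `h^∞ ξ` are bounded by `B (1 + 2L)`. -/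

open Topology

section RecessionFunction

variable {N d : ℕ} {h : (Fin d → Fin N → ℝ) → ℝ} {B : ℝ}

lemma div_le_of_linear_growth (hub : ∀ ζ, h ζ ≤ B * (1 + ‖ζ‖)) (ξ : Fin d → Fin N → ℝ)
    {t : ℝ} (ht : 0 < t) : h (t • ξ) / t ≤ B * (t⁻¹ + ‖ξ‖) := by
  have hgrowth := hub (t • ξ)
  rw [norm_smul, Real.norm_of_nonneg ht.le] at hgrowth
  calc h (t • ξ) / t ≤ B * (1 + t * ‖ξ‖) / t := by gcongr
    _ = B * (t⁻¹ + ‖ξ‖) := by field_simp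

lemma tendsto_linear_growth_bound (B : ℝ) (ξ : Fin d → Fin N → ℝ) :
    Tendsto (fun t : ℝ => B * (t⁻¹ + ‖ξ‖)) atTop (𝓝 (B * ‖ξ‖)) := by
  simpa using (tendsto_inv_atTop_zero.add_const ‖ξ‖).const_mul B

lemma eventually_recFn_quotient_le (hub : ∀ ζ, h ζ ≤ B * (1 + ‖ζ‖))
    (ξ : Fin d → Fin N → ℝ) :
    (fun t : ℝ => h (t • ξ) / t) ≤ᶠ[atTop] fun t => B * (t⁻¹ + ‖ξ‖) := by
  filter_upwards [eventually_gt_atTop 0] with t ht using div_le_of_linear_growth hub ξ ht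

lemma isBoundedUnder_le_recFn_quotient (hub : ∀ ζ, h ζ ≤ B * (1 + ‖ζ‖)) (ξ : Fin d → Fin N → ℝ) :
    IsBoundedUnder (· ≤ ·) atTop (fun t : ℝ => h (t • ξ) / t) :=
  (tendsto_linear_growth_bound B ξ).isBoundedUnder_le.mono_le
    (eventually_recFn_quotient_le hub ξ)

lemma eventually_recFn_quotient_nonneg (h0 : ∀ ζ, 0 ≤ h ζ) (ξ : Fin d → Fin N → ℝ) :
    ∀ᶠ t : ℝ in atTop, 0 ≤ h (t • ξ) / t := by
  filter_upwards [eventually_ge_atTop 0] with t ht using div_nonneg (h0 _) ht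

lemma isCoboundedUnder_le_recFn_quotient (h0 : ∀ ζ, 0 ≤ h ζ) (ξ : Fin d → Fin N → ℝ) :
    IsCoboundedUnder (· ≤ ·) atTop (fun t : ℝ => h (t • ξ) / t) :=
  isCoboundedUnder_le_of_eventually_le atTop (eventually_recFn_quotient_nonneg h0 ξ)

lemma recFn_nonneg (h0 : ∀ ζ, 0 ≤ h ζ) (hub : ∀ ζ, h ζ ≤ B * (1 + ‖ζ‖))
    (ξ : Fin d → Fin N → ℝ) : 0 ≤ recFn h ξ :=
  le_limsup_of_frequently_le (eventually_recFn_quotient_nonneg h0 ξ).frequently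
    (isBoundedUnder_le_recFn_quotient hub ξ)

lemma recFn_le (h0 : ∀ ζ, 0 ≤ h ζ) (hub : ∀ ζ, h ζ ≤ B * (1 + ‖ζ‖))
    (ξ : Fin d → Fin N → ℝ) : recFn h ξ ≤ B * ‖ξ‖ :=
  (tendsto_linear_growth_bound B ξ).limsup_eq ▸
    limsup_le_limsup (eventually_recFn_quotient_le hub ξ) (isCoboundedUnder_le_recFn_quotient h0 ξ)
      (tendsto_linear_growth_bound B ξ).isBoundedUnder_le

lemma recFn_smul (h0 : ∀ ζ, 0 ≤ h ζ) (hub : ∀ ζ, h ζ ≤ B * (1 + ‖ζ‖))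
    (ξ : Fin d → Fin N → ℝ) {c : ℝ} (hc : 0 < c) : recFn h (c • ξ) = c * recFn h ξ := by
  let q : ℝ → ℝ := fun t => h (t • ξ) / t
  let m : ℝ ≃o ℝ := OrderIso.mulLeft₀ c hc
  have hrescale : (fun t : ℝ => h (t • c • ξ) / t) = (fun t => m (q t)) ∘ m := by
    funext t
    simp only [Function.comp_apply, m, q, OrderIso.mulLeft₀_apply, smul_smul, mul_comm t c]
    rw [← mul_div_assoc, mul_div_mul_left _ _ hc.ne']
  have hmq_cobdd : IsCoboundedUnder (· ≤ ·) atTop (fun t => m (q t)) :=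
    isCoboundedUnder_le_of_eventually_le atTop <| (eventually_recFn_quotient_nonneg h0 ξ).mono
      fun t ht => mul_nonneg hc.le ht
  have hq_bdd := isBoundedUnder_le_recFn_quotient hub ξ
  unfold recFn
  rw [hrescale, limsup_comp, m.map_atTop, ← m.limsup_apply hq_bdd
    (isCoboundedUnder_le_recFn_quotient h0 ξ) (m.isBoundedUnder_le_comp.2 hq_bdd) hmq_cobdd]
  rfl

lemma abs_recFn_sub_le_of_norm_le (h0 : ∀ ζ, 0 ≤ h ζ) (hub : ∀ ζ, h ζ ≤ B * (1 + ‖ζ‖))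
    {ξ : Fin d → Fin N → ℝ} {L : ℝ} (hξ : ‖ξ‖ ≤ L) : |recFn h ξ - h ξ| ≤ B * (1 + 2 * L) := by
  have hB : 0 ≤ B := by simpa using (h0 0).trans (hub 0)
  have hrec := recFn_le h0 hub ξ
  have hval := hub ξ
  rw [abs_sub_le_iff]
  constructor <;> nlinarith [recFn_nonneg h0 hub ξ, h0 ξ]

lemma abs_recFn_sub_le_of_rate (h0 : ∀ ζ, 0 ≤ h ζ) (hub : ∀ ζ, h ζ ≤ B * (1 + ‖ζ‖))
    {α C L : ℝ} (hC : 0 ≤ C) (hL : 0 ≤ L)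
    (hrate : ∀ ζ, L < ‖ζ‖ → |recFn h ζ - h ζ| ≤ C * ‖ζ‖ ^ (1 - α)) (ξ : Fin d → Fin N → ℝ) :
    |recFn h ξ - h ξ| ≤ (C + B * (1 + 2 * L)) * (1 + ‖ξ‖ ^ (1 - α)) := by
  have hB : 0 ≤ B := by simpa using (h0 0).trans (hub 0)
  have hpow : 0 ≤ ‖ξ‖ ^ (1 - α) := by positivity
  have hBL : 0 ≤ B * (1 + 2 * L) := by positivity
  rcases le_or_gt ‖ξ‖ L with hsmall | hlarge
  · nlinarith [abs_recFn_sub_le_of_norm_le h0 hub hsmall]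
  · nlinarith [hrate ξ hlarge]

lemma abs_recFn_sub_div_le (h0 : ∀ ζ, 0 ≤ h ζ) (hub : ∀ ζ, h ζ ≤ B * (1 + ‖ζ‖))
    {α C : ℝ} (hα : α ≤ 1) (hC : 0 ≤ C)
    (hdev : ∀ ζ, |recFn h ζ - h ζ| ≤ C * (1 + ‖ζ‖ ^ (1 - α)))
    {ξ : Fin d → Fin N → ℝ} {t : ℝ} (ht : 1 < t * ‖ξ‖) :
    |recFn h ξ - h (t • ξ) / t| ≤ 2 * C * ‖ξ‖ ^ (1 - α) / t ^ α := by
  have ht0 : 0 < t := pos_of_mul_pos_left (one_pos.trans ht) (norm_nonneg ξ)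
  have hone : 1 ≤ (t * ‖ξ‖) ^ (1 - α) := Real.one_le_rpow ht.le (by linarith)
  have hsplit : (t * ‖ξ‖) ^ (1 - α) = t * ‖ξ‖ ^ (1 - α) / t ^ α := by
    rw [Real.mul_rpow ht0.le (norm_nonneg ξ), Real.rpow_sub ht0, Real.rpow_one]
    ring
  have hdev_t := hdev (t • ξ)
  rw [norm_smul, Real.norm_of_nonneg ht0.le] at hdev_t
  calc |recFn h ξ - h (t • ξ) / t| = |recFn h (t • ξ) - h (t • ξ)| / t := by
        rw [recFn_smul h0 hub ξ ht0, ← abs_of_pos ht0, ← abs_div, abs_of_pos ht0]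
        field_simp
    _ ≤ C * (2 * (t * ‖ξ‖) ^ (1 - α)) / t := by gcongr; exact hdev_t.trans (by gcongr; linarith)
    _ = 2 * C * ‖ξ‖ ^ (1 - α) / t ^ α := by rw [hsplit]; field_simp

end RecessionFunction

theorem stmt7_general {N d : ℕ} (Ω : Set (Fin N → ℝ))
    (W : (Fin N → ℝ) → (Fin d → ℝ) → (Fin d → Fin N → ℝ) → ℝ) (C₀ : ℝ) (hC₀ : 0 < C₀)
    (hWnonneg : ∀ x ∈ Ω, ∀ (u : Fin d → ℝ) (ξ : Fin d → Fin N → ℝ), 0 ≤ W x u ξ)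
    (hW : ∀ x ∈ Ω, ∀ (u : Fin d → ℝ) (ξ : Fin d → Fin N → ℝ),
      (1 / C₀) * ‖ξ‖ - C₀ ≤ W x u ξ ∧ W x u ξ ≤ C₀ * (1 + ‖ξ‖)) :
    (∃ α C L : ℝ, α ∈ Set.Ioo (0:ℝ) 1 ∧ 0 < C ∧ 0 < L ∧
      ∀ x ∈ Ω, ∀ (u : Fin d → ℝ) (ξ : Fin d → Fin N → ℝ), ∀ t : ℝ, t * ‖ξ‖ > L →
        |recFn (W x u) ξ - W x u (t • ξ) / t| ≤ C * ‖ξ‖ ^ ((1:ℝ) - α) / t ^ α) ↔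
    (∃ α C : ℝ, α ∈ Set.Ioo (0:ℝ) 1 ∧ 0 < C ∧
      ∀ x ∈ Ω, ∀ (u : Fin d → ℝ) (ξ : Fin d → Fin N → ℝ),
        |recFn (W x u) ξ - W x u ξ| ≤ C * (1 + ‖ξ‖ ^ ((1:ℝ) - α))) := by
  constructor
  · rintro ⟨α, C, L, hα, hC, hL, hrate⟩
    refine ⟨α, C + C₀ * (1 + 2 * L), hα, by positivity, fun x hx u ξ => ?_⟩
    refine abs_recFn_sub_le_of_rate (hWnonneg x hx u) (fun ζ => (hW x hx u ζ).2) hC.le hL.le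
      (fun ζ hζ => ?_) ξ
    simpa using hrate x hx u ζ 1 (by simpa using hζ)
  · rintro ⟨α, C, hα, hC, hdev⟩
    exact ⟨α, 2 * C, 1, hα, by positivity, one_pos, fun x hx u ξ t ht =>
      abs_recFn_sub_div_le (hWnonneg x hx u) (fun ζ => (hW x hx u ζ).2) hα.2.le hC.le
        (hdev x hx u) ht⟩

theorem stmt7 {N d : ℕ} (Ω : Set (Fin N → ℝ)) (hΩo : IsOpen Ω) (hΩb : Bornology.IsBounded Ω)
    (W : (Fin N → ℝ) → (Fin d → ℝ) → (Fin d → Fin N → ℝ) → ℝ) (C₀ : ℝ) (hC₀ : 0 < C₀)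
    (hWnonneg : ∀ x ∈ Ω, ∀ (u : Fin d → ℝ) (ξ : Fin d → Fin N → ℝ), 0 ≤ W x u ξ)
    (hW : ∀ x ∈ Ω, ∀ (u : Fin d → ℝ) (ξ : Fin d → Fin N → ℝ),
      (1 / C₀) * ‖ξ‖ - C₀ ≤ W x u ξ ∧ W x u ξ ≤ C₀ * (1 + ‖ξ‖)) :
    (∃ α C L : ℝ, α ∈ Set.Ioo (0:ℝ) 1 ∧ 0 < C ∧ 0 < L ∧
      ∀ x ∈ Ω, ∀ (u : Fin d → ℝ) (ξ : Fin d → Fin N → ℝ), ∀ t : ℝ, t * ‖ξ‖ > L →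
        |recFn (W x u) ξ - W x u (t • ξ) / t| ≤ C * ‖ξ‖ ^ ((1:ℝ) - α) / t ^ α) ↔
    (∃ α C : ℝ, α ∈ Set.Ioo (0:ℝ) 1 ∧ 0 < C ∧
      ∀ x ∈ Ω, ∀ (u : Fin d → ℝ) (ξ : Fin d → Fin N → ℝ),
        |recFn (W x u) ξ - W x u ξ| ≤ C * (1 + ‖ξ‖ ^ ((1:ℝ) - α))) :=
  stmt7_general Ω W C₀ hC₀ hWnonneg hW

end
end

section
/- Let φ : Ω × ℝ^d × ℝ^m → ℝ be a Carathéodory function satisfying C⁻¹|v|^q - C ≤ φ(x,u,v) ≤ C(1+|u|^p+|v|^q), and suppose additionally |φ(x,u,v) - φ(x,u',v)| ≤ ω'(|u-u'|)(1+|v|) for a modulus of continuity ω'. Then the convex envelope Cφ(x,·,·) : ℝ^d × ℝ^m → ℝ is continuous for a.e. x ∈ Ω. -/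
open MeasureTheory Filter Set

noncomputable section

/-!
Fix `x` and write `g_u = φ(x, u, ·)`. The coercivity bound `C⁻¹|w|^q - C ≤ g_u(w)` absorbs the
linear growth in the continuity estimate in `u`: with `ε = ω'(|u - u'|)` it gives
`g_{u'} ≤ (1 + εC) g_u + ε(2 + C²)`. Taking convex envelopes, which are monotone and commute with
positive affine maps of the values, `Cg_{u'} - Cg_u ≤ ε (C g_u + 2 + C²)` pointwise. As `g_u(v)`
is continuous in `(u, v)`, this makes `Cg_u(v)` continuous in `u` locally uniformly in `v`; and each
`Cg_u` is a finite convex function on `ℝ^m`, hence continuous in `v`.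
-/

open Topology

section ConvexEnvelope

variable {m : ℕ}

lemma le_convEnv {g h : (Fin m → ℝ) → ℝ} (hconv : ConvexOn ℝ univ h) (hle : ∀ w, h w ≤ g w)
    (v : Fin m → ℝ) : h v ≤ convEnv g v :=
  le_csSup ⟨g v, by rintro r ⟨h, -, hle, rfl⟩; exact hle v⟩ ⟨h, hconv, hle, rfl⟩

lemma convEnv_le_of_forall_le {g : (Fin m → ℝ) → ℝ} (hg : BddBelow (range g)) {v : Fin m → ℝ}
    {b : ℝ} (hb : ∀ h : (Fin m → ℝ) → ℝ, ConvexOn ℝ univ h → (∀ w, h w ≤ g w) → h v ≤ b) :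
    convEnv g v ≤ b := by
  obtain ⟨c, hc⟩ := hg
  refine csSup_le ⟨c, fun _ => c, convexOn_const c convex_univ,
    fun w => hc (mem_range_self w), rfl⟩ ?_
  rintro r ⟨h, hconv, hle, rfl⟩
  exact hb h hconv hle

lemma convEnv_le {g : (Fin m → ℝ) → ℝ} (hg : BddBelow (range g)) (v : Fin m → ℝ) :
    convEnv g v ≤ g v :=
  convEnv_le_of_forall_le hg fun _ _ hle => hle v

lemma convexOn_convEnv {g : (Fin m → ℝ) → ℝ} (hg : BddBelow (range g)) :
    ConvexOn ℝ univ (convEnv g) := by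
  refine ⟨convex_univ, fun x _ y _ s t hs ht hst => ?_⟩
  refine convEnv_le_of_forall_le hg fun h hconv hle => ?_
  calc h (s • x + t • y) ≤ s • h x + t • h y := hconv.2 (mem_univ x) (mem_univ y) hs ht hst
    _ ≤ s • convEnv g x + t • convEnv g y := by
      gcongr <;> exact le_convEnv hconv hle _

lemma continuous_convEnv {g : (Fin m → ℝ) → ℝ} (hg : BddBelow (range g)) :
    Continuous (convEnv g) :=
  continuousOn_univ.mp ((convexOn_convEnv hg).continuousOn isOpen_univ)

lemma convEnv_le_mul_add {g₁ g₂ : (Fin m → ℝ) → ℝ} {a b : ℝ} (ha : 0 < a)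
    (hg₁ : BddBelow (range g₁)) (hle : ∀ w, g₁ w ≤ a * g₂ w + b) (v : Fin m → ℝ) :
    convEnv g₁ v ≤ a * convEnv g₂ v + b := by
  refine convEnv_le_of_forall_le hg₁ fun h hconv hmin => ?_
  have hconv' : ConvexOn ℝ univ fun w => a⁻¹ • (h w + -b) :=
    (hconv.add_const (-b)).smul (inv_nonneg.2 ha.le)
  have hmin' : ∀ w, a⁻¹ • (h w + -b) ≤ g₂ w := fun w => by
    rw [smul_eq_mul, inv_mul_le_iff₀ ha]
    linarith [hle w, hmin w]
  have := le_convEnv hconv' hmin' v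
  rw [smul_eq_mul, inv_mul_le_iff₀ ha] at this
  linarith

end ConvexEnvelope

lemma le_one_add_mul_add_of_coercive {a a' t ε C q : ℝ} (ht : 0 ≤ t) (hq : 1 ≤ q) (hC : 0 < C)
    (hε : 0 ≤ ε) (hcoer : C⁻¹ * t ^ q - C ≤ a) (hle : a' ≤ a + ε * (1 + t)) :
    a' ≤ (1 + ε * C) * a + ε * (2 + C ^ 2) := by
  have ht_le : t ≤ 1 + t ^ q := by
    rcases le_total t 1 with h | h
    · linarith [Real.rpow_nonneg ht q]
    · linarith [Real.self_le_rpow_of_one_le h hq]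
  have htq_le : t ^ q ≤ C * (a + C) := by
    rw [← inv_mul_le_iff₀ hC]
    linarith
  nlinarith [mul_le_mul_of_nonneg_left ht_le hε, mul_le_mul_of_nonneg_left htq_le hε]

lemma neg_le_of_inv_mul_rpow_sub_le {a t C q : ℝ} (hC : 0 ≤ C) (ht : 0 ≤ t)
    (h : C⁻¹ * t ^ q - C ≤ a) : -C ≤ a := by
  linarith [mul_nonneg (inv_nonneg.2 hC) (Real.rpow_nonneg ht q)]

lemma convEnv_sub_convEnv_le {m : ℕ} {g g' : (Fin m → ℝ) → ℝ} {C q ε : ℝ} (hC : 0 < C)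
    (hq : 1 ≤ q) (hε : 0 ≤ ε) (hcoer : ∀ w, C⁻¹ * ‖w‖ ^ q - C ≤ g w)
    (hg' : BddBelow (range g')) (hle : ∀ w, g' w ≤ g w + ε * (1 + ‖w‖)) (v : Fin m → ℝ) :
    convEnv g' v - convEnv g v ≤ ε * (C * g v + (2 + C ^ 2)) := by
  have hg : BddBelow (range g) :=
    ⟨-C, forall_mem_range.2 fun w => neg_le_of_inv_mul_rpow_sub_le hC.le (norm_nonneg w) (hcoer w)⟩
  have henv := convEnv_le_mul_add (by positivity) hg'
    (fun w => le_one_add_mul_add_of_coercive (norm_nonneg w) hq hC hε (hcoer w) (hle w)) v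
  have := mul_le_mul_of_nonneg_left (convEnv_le hg v) (mul_nonneg hε hC.le)
  linarith

lemma continuousAt_uncurry_of_abs_sub_le {X Y : Type*} [TopologicalSpace X] [TopologicalSpace Y]
    {F G : X → Y → ℝ} {x₀ : X} {y₀ : Y} (hF : ContinuousAt (F x₀) y₀)
    (hG : ContinuousAt (Function.uncurry G) (x₀, y₀)) (hG₀ : G x₀ y₀ = 0)
    (hle : ∀ x y, |F x y - F x₀ y| ≤ G x y) :
    ContinuousAt (Function.uncurry F) (x₀, y₀) := by
  have hvar : Tendsto (fun p : X × Y => F p.1 p.2 - F x₀ p.2) (𝓝 (x₀, y₀)) (𝓝 0) :=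
    squeeze_zero_norm (fun p => hle p.1 p.2) (hG₀ ▸ hG.tendsto)
  have hfix : Tendsto (fun p : X × Y => F x₀ p.2) (𝓝 (x₀, y₀)) (𝓝 (F x₀ y₀)) :=
    hF.tendsto.comp continuousAt_snd
  simpa [ContinuousAt, Function.uncurry_def] using hvar.add hfix

theorem stmt11_general {N d m : ℕ} (Ω : Set (Fin N → ℝ)) (hΩo : IsOpen Ω)
    (φ : (Fin N → ℝ) → (Fin d → ℝ) → (Fin m → ℝ) → ℝ)
    (hcar : ∀ᵐ x ∂(volume.restrict Ω),
      Continuous fun p : (Fin d → ℝ) × (Fin m → ℝ) => φ x p.1 p.2)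
    (C p q : ℝ) (hC : 0 < C) (hq : 1 ≤ q)
    (hφ : ∀ x ∈ Ω, ∀ (u : Fin d → ℝ) (v : Fin m → ℝ),
      C⁻¹ * ‖v‖ ^ q - C ≤ φ x u v ∧ φ x u v ≤ C * (1 + ‖u‖ ^ p + ‖v‖ ^ q))
    (ω' : ℝ → ℝ) (hω' : Modulus ω')
    (hu : ∀ x ∈ Ω, ∀ (u u' : Fin d → ℝ) (v : Fin m → ℝ),
      |φ x u v - φ x u' v| ≤ ω' ‖u - u'‖ * (1 + ‖v‖)) :
    ∀ᵐ x ∂(volume.restrict Ω),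
      Continuous fun p : (Fin d → ℝ) × (Fin m → ℝ) => convEnv (φ x p.1) p.2 := by
  filter_upwards [ae_restrict_mem hΩo.measurableSet, hcar] with x hx hcont
  obtain ⟨hωc, hω0, hωnn⟩ := hω'
  have hlow u w : -C ≤ φ x u w :=
    neg_le_of_inv_mul_rpow_sub_le hC.le (norm_nonneg w) (hφ x hx u w).1
  have hbdd u : BddBelow (range (φ x u)) := ⟨-C, forall_mem_range.2 (hlow u)⟩
  let M u v := C * φ x u v + (2 + C ^ 2)
  have hM u v : 0 ≤ M u v := by nlinarith [hlow u v]
  have hMc : Continuous fun p : (Fin d → ℝ) × (Fin m → ℝ) => M p.1 p.2 :=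
    (continuous_const.mul hcont).add continuous_const
  have hdiff u u' v : convEnv (φ x u') v - convEnv (φ x u) v ≤ ω' ‖u' - u‖ * M u v :=
    convEnv_sub_convEnv_le hC hq (hωnn _) (fun w => (hφ x hx u w).1) (hbdd u')
      (fun w => by linarith [(abs_le.1 (hu x hx u' u w)).2]) v
  refine continuous_iff_continuousAt.2 fun ⟨u₀, v₀⟩ => continuousAt_uncurry_of_abs_sub_le
    (F := fun u v => convEnv (φ x u) v) (x₀ := u₀) (y₀ := v₀)
    (G := fun u v => ω' ‖u - u₀‖ * (M u v + M u₀ v))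
    (continuous_convEnv (hbdd u₀)).continuousAt ?_ (by simp [hω0]) fun u v => ?_
  · exact ((hωc.comp (continuous_fst.sub continuous_const).norm).mul
      (hMc.add (hMc.comp (continuous_const.prodMk continuous_snd)))).continuousAt
  · have h₁ := hdiff u₀ u v
    have h₂ := hdiff u u₀ v
    rw [norm_sub_rev] at h₂
    rw [abs_sub_le_iff]
    constructor <;> linarith [mul_nonneg (hωnn ‖u - u₀‖) (hM u v),
      mul_nonneg (hωnn ‖u - u₀‖) (hM u₀ v)]

theorem stmt11 {N d m : ℕ} (Ω : Set (Fin N → ℝ)) (hΩo : IsOpen Ω)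
    (hΩb : Bornology.IsBounded Ω)
    (φ : (Fin N → ℝ) → (Fin d → ℝ) → (Fin m → ℝ) → ℝ)
    (hmeas : ∀ (u : Fin d → ℝ) (v : Fin m → ℝ), Measurable fun x => φ x u v)
    (hcar : ∀ᵐ x ∂(volume.restrict Ω),
      Continuous fun p : (Fin d → ℝ) × (Fin m → ℝ) => φ x p.1 p.2)
    (C p q : ℝ) (hC : 0 < C) (hp : 1 ≤ p) (hq : 1 ≤ q)
    (hφ : ∀ x ∈ Ω, ∀ (u : Fin d → ℝ) (v : Fin m → ℝ),
      C⁻¹ * ‖v‖ ^ q - C ≤ φ x u v ∧ φ x u v ≤ C * (1 + ‖u‖ ^ p + ‖v‖ ^ q))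
    (ω' : ℝ → ℝ) (hω' : Modulus ω')
    (hu : ∀ x ∈ Ω, ∀ (u u' : Fin d → ℝ) (v : Fin m → ℝ),
      |φ x u v - φ x u' v| ≤ ω' ‖u - u'‖ * (1 + ‖v‖)) :
    ∀ᵐ x ∂(volume.restrict Ω),
      Continuous fun p : (Fin d → ℝ) × (Fin m → ℝ) => convEnv (φ x p.1) p.2 :=
  stmt11_general Ω hΩo φ hcar C p q hC hq hφ ω' hω' hu
end
end
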